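/- arXiv:2603.07503 — 3 statements merged into one kernel-verified Lean document; each statement's English description precedes it below -/
import Mathlib

section
/- Every remotely τ-periodic continuous function φ : ℝ≥0 → B (i.e. |φ(t+τ) - φ(t)| → 0 as t → ∞ for a fixed τ > 0) is remotely almost periodic: for every ε > 0 the set {nτ : n ∈ ℕ} is relatively dense in ℝ≥0 and for every n there exists L such that |φ(t + nτ) - φ(t)| < ε for all t ≥ L. -/
open Filter

/-- Every remotely τ-periodic continuous function is remotely almost periodic:
for every ε > 0 the set {nτ : n ∈ ℕ} is relatively dense in ℝ≥0 and every nτ is a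
remote ε-almost period. -/
theorem remotely_periodic_is_remotely_almost_periodic
    {B : Type*} [NormedAddCommGroup B] [NormedSpace ℝ B] [CompleteSpace B]
    (τ : ℝ) (hτ : 0 < τ) (φ : ℝ → B) (hφ : Continuous φ)
    (hrp : Tendsto (fun t => ‖φ (t + τ) - φ t‖) atTop (nhds 0)) :
    ∀ ε > 0,
      (∃ l > 0, ∀ a ≥ (0:ℝ), ∃ n : ℕ, (n : ℝ) * τ ∈ Set.Icc a (a + l)) ∧
      (∀ n : ℕ, ∃ L : ℝ, ∀ t ≥ L, ‖φ (t + (n : ℝ) * τ) - φ t‖ < ε) := by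
  intro ε hε
  constructor
  · refine ⟨τ, hτ, fun a ha => ⟨⌈a / τ⌉₊, ?_, ?_⟩⟩
    · have := Nat.le_ceil (a / τ)
      calc a = (a / τ) * τ := by field_simp
        _ ≤ (⌈a / τ⌉₊ : ℝ) * τ := by nlinarith [Nat.le_ceil (a / τ)]
    · have h1 : (⌈a / τ⌉₊ : ℝ) < a / τ + 1 := by
        have := Nat.ceil_lt_add_one (a := a / τ) (by positivity)
        exact this
      have h2 : (a / τ) * τ = a := by field_simp
      nlinarith
  · intro n
    rcases Nat.eq_zero_or_pos n with rfl | hn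
    · exact ⟨0, fun t _ => by simpa using hε⟩
    · have hεn : 0 < ε / n := by positivity
      have hev : ∀ᶠ t in atTop, ‖φ (t + τ) - φ t‖ < ε / n := by
        have := hrp.eventually (eventually_lt_nhds hεn)
        simpa using this
      rcases hev.exists_forall_of_atTop with ⟨L, hL⟩
      refine ⟨L, fun t ht => ?_⟩
      have key : φ (t + (n : ℝ) * τ) - φ t =
          ∑ k ∈ Finset.range n, (φ (t + ((k : ℝ) + 1) * τ) - φ (t + (k : ℝ) * τ)) := by
        have := Finset.sum_range_sub (fun k => φ (t + (k : ℝ) * τ)) n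
        simp only [Nat.cast_zero, zero_mul, add_zero, Nat.cast_add, Nat.cast_one] at this ⊢
        rw [this]
      rw [key]
      calc ‖∑ k ∈ Finset.range n, (φ (t + ((k : ℝ) + 1) * τ) - φ (t + (k : ℝ) * τ))‖
          ≤ ∑ k ∈ Finset.range n, ‖φ (t + ((k : ℝ) + 1) * τ) - φ (t + (k : ℝ) * τ)‖ :=
            norm_sum_le _ _
        _ < ∑ _k ∈ Finset.range n, ε / n := by
            apply Finset.sum_lt_sum_of_nonempty (Finset.nonempty_range_iff.mpr hn.ne')
            intro k hk
            have harg : t + ((k : ℝ) + 1) * τ = (t + (k : ℝ) * τ) + τ := by ring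
            rw [harg]
            apply hL
            have : 0 ≤ (k : ℝ) * τ := by positivity
            linarith
        _ = ε := by
            rw [Finset.sum_const, Finset.card_range, nsmul_eq_mul]
            field_simp
end

section
/- The function ψ(t) = sin(t + log(1+t)) is not asymptotically 2π-periodic: there is no α ∈ ℝ such that |sin(t + log(1+t)) − sin(t + α)| → 0 as t → ∞. -/
open Filter Real

/-- cos is 1-Lipschitz (in abs form). -/
lemma my_abs_cos_sub_cos_le (a b : ℝ) : |Real.cos a - Real.cos b| ≤ |a - b| := by
  rw [Real.cos_sub_cos]
  have h1 : |Real.sin ((a + b) / 2)| ≤ 1 :=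
    abs_le.mpr ⟨Real.neg_one_le_sin _, Real.sin_le_one _⟩
  have h2 : |Real.sin ((a - b) / 2)| ≤ |(a - b) / 2| := Real.abs_sin_le_abs
  calc |(-2) * Real.sin ((a + b) / 2) * Real.sin ((a - b) / 2)|
      = 2 * (|Real.sin ((a + b) / 2)| * |Real.sin ((a - b) / 2)|) := by
        rw [abs_mul, abs_mul]; simp [mul_assoc]
    _ ≤ 2 * (1 * |(a - b) / 2|) := by
        apply mul_le_mul_of_nonneg_left _ (by norm_num)
        exact mul_le_mul h1 h2 (abs_nonneg _) zero_le_one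
    _ = |a - b| := by rw [one_mul, abs_div]; simp [abs_of_nonneg]; ring

/-- ψ(t) = sin(t + log(1+t)) is not asymptotically 2π-periodic: it is not asymptotic to
any shift sin(t+α) of the sine function. -/
theorem sin_add_log_not_asymptotically_periodic :
    ¬ ∃ α : ℝ,
        Tendsto (fun t : ℝ => |Real.sin (t + Real.log (1 + t)) - Real.sin (t + α)|)
          atTop (nhds 0) := by
  rintro ⟨α, h⟩
  set β : ℝ → ℝ := fun t => Real.log (1 + t) with hβ
  -- Step A: sine differences tend to 0 (drop abs)
  have hs : Tendsto (fun t => Real.sin (t + β t) - Real.sin (t + α)) atTop (nhds 0) :=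
    (tendsto_zero_iff_abs_tendsto_zero _).mpr h
  -- shift by π/2
  have hshift : Tendsto (fun t : ℝ => t + π / 2) atTop atTop :=
    tendsto_atTop_add_const_right _ _ tendsto_id
  -- Step B1: cosine differences with shifted log tend to 0
  have hc' : Tendsto (fun t => Real.cos (t + β (t + π / 2)) - Real.cos (t + α))
      atTop (nhds 0) := by
    have h1 := hs.comp hshift
    have heq : ((fun t => Real.sin (t + β t) - Real.sin (t + α)) ∘ fun t : ℝ => t + π / 2)
        = fun t => Real.cos (t + β (t + π / 2)) - Real.cos (t + α) := by
      funext t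
      simp only [Function.comp]
      rw [show (t + π / 2) + β (t + π / 2) = (t + β (t + π / 2)) + π / 2 by ring,
        show (t + π / 2) + α = (t + α) + π / 2 by ring,
        Real.sin_add_pi_div_two, Real.sin_add_pi_div_two]
    rwa [heq] at h1
  -- Step B2: β(t+π/2) - β(t) → 0
  have hβdiff : Tendsto (fun t => β (t + π / 2) - β t) atTop (nhds 0) := by
    apply squeeze_zero' (g := fun t => (π / 2) / (1 + t))
    · filter_upwards [eventually_ge_atTop (0 : ℝ)] with t ht
      have h1t : (0 : ℝ) < 1 + t := by linarith
      have : (1 : ℝ) + t ≤ 1 + (t + π / 2) := by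
        have := Real.pi_pos; linarith
      simp only [hβ, sub_nonneg]
      exact Real.log_le_log h1t this
    · filter_upwards [eventually_ge_atTop (0 : ℝ)] with t ht
      have h1t : (0 : ℝ) < 1 + t := by linarith
      have hpos : (0 : ℝ) < 1 + (t + π / 2) := by
        have := Real.pi_pos; linarith
      have : β (t + π / 2) - β t = Real.log ((1 + (t + π / 2)) / (1 + t)) := by
        simp only [hβ]
        rw [Real.log_div (by linarith) (by linarith)]
      rw [this]
      have hq : (0 : ℝ) < (1 + (t + π / 2)) / (1 + t) := div_pos hpos h1t
      have := Real.log_le_sub_one_of_pos hq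
      have heq2 : (1 + (t + π / 2)) / (1 + t) - 1 = (π / 2) / (1 + t) := by
        field_simp
        ring
      linarith
    · exact Tendsto.div_atTop tendsto_const_nhds
        (tendsto_atTop_add_const_left _ _ tendsto_id)
  -- Step B3: cosine differences (unshifted log) tend to 0
  have hc : Tendsto (fun t => Real.cos (t + β t) - Real.cos (t + α)) atTop (nhds 0) := by
    have hdiff : Tendsto (fun t => Real.cos (t + β t) - Real.cos (t + β (t + π / 2)))
        atTop (nhds 0) := by
      apply squeeze_zero_norm (a := fun t => |β (t + π / 2) - β t|)
      · intro t
        have := my_abs_cos_sub_cos_le (t + β t) (t + β (t + π / 2))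
        simpa [abs_sub_comm, show t + β t - (t + β (t + π / 2)) = -(β (t + π / 2) - β t) by ring]
          using this
      · simpa using hβdiff.abs
    have := hdiff.add hc'
    simpa using this
  -- Step C: cos (β t - α) → 1
  have key : Tendsto (fun t => Real.cos (β t - α)) atTop (nhds 1) := by
    have hid : (fun t => Real.cos (β t - α))
        = fun t => 1 + ((Real.cos (t + β t) - Real.cos (t + α)) * Real.cos (t + α)
            + (Real.sin (t + β t) - Real.sin (t + α)) * Real.sin (t + α)) := by
      funext t
      rw [show β t - α = (t + β t) - (t + α) by ring, Real.cos_sub]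
      nlinarith [Real.sin_sq_add_cos_sq (t + α)]
    rw [hid]
    have h1 : Tendsto (fun t => (Real.cos (t + β t) - Real.cos (t + α)) * Real.cos (t + α))
        atTop (nhds 0) := by
      apply squeeze_zero_norm (a := fun t => |Real.cos (t + β t) - Real.cos (t + α)|)
      · intro t
        rw [Real.norm_eq_abs, abs_mul]
        exact mul_le_of_le_one_right (abs_nonneg _)
          (abs_le.mpr ⟨Real.neg_one_le_cos _, Real.cos_le_one _⟩)
      · simpa using hc.abs
    have h2 : Tendsto (fun t => (Real.sin (t + β t) - Real.sin (t + α)) * Real.sin (t + α))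
        atTop (nhds 0) := by
      apply squeeze_zero_norm (a := fun t => |Real.sin (t + β t) - Real.sin (t + α)|)
      · intro t
        rw [Real.norm_eq_abs, abs_mul]
        exact mul_le_of_le_one_right (abs_nonneg _)
          (abs_le.mpr ⟨Real.neg_one_le_sin _, Real.sin_le_one _⟩)
      · simpa using hs.abs
    have := (tendsto_const_nhds (x := (1 : ℝ)) (f := atTop)).add (h1.add h2)
    simpa using this
  -- Step D: evaluate along t_n = exp(α + π + 2πn) - 1
  set T : ℕ → ℝ := fun n => Real.exp (α + π + (n : ℝ) * (2 * π)) - 1 with hT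
  have hTtop : Tendsto T atTop atTop := by
    apply tendsto_atTop_add_const_right
    apply Real.tendsto_exp_atTop.comp
    apply tendsto_atTop_add_const_left
    exact (tendsto_natCast_atTop_atTop (R := ℝ)).atTop_mul_const (by positivity)
  have hval : ∀ n : ℕ, β (T n) - α = π + (n : ℝ) * (2 * π) := by
    intro n
    simp only [hβ, hT]
    rw [show (1 : ℝ) + (Real.exp (α + π + (n : ℝ) * (2 * π)) - 1)
        = Real.exp (α + π + (n : ℝ) * (2 * π)) by ring, Real.log_exp]
    ring
  have hfinal := key.comp hTtop
  have heq : ((fun t => Real.cos (β t - α)) ∘ T) = fun _ : ℕ => (-1 : ℝ) := by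
    funext n
    simp only [Function.comp]
    rw [hval n, Real.cos_add_nat_mul_two_pi, Real.cos_pi]
  rw [heq] at hfinal
  have := tendsto_nhds_unique hfinal tendsto_const_nhds
  norm_num at this
end

section
/- The set of remotely almost periodic bounded uniformly continuous functions f : ℝ≥0 → B is closed under uniform limits: if fₙ are remotely almost periodic and fₙ → f uniformly on ℝ≥0, then f is remotely almost periodic. -/
open Filter

/-- τ is a remote ε-almost period of f : limsup_{t→∞} ‖f(t+τ) − f(t)‖ < ε. -/
def IsRemoteAlmostPeriod {B : Type*} [NormedAddCommGroup B] (f : ℝ → B) (ε τ : ℝ) : Prop :=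
  Filter.limsup (fun t => ‖f (t + τ) - f t‖) Filter.atTop < ε

/-- P is relatively dense in ℝ≥0: some l > 0 works so that every [a, a+l] with a ≥ 0 meets P. -/
def RelativelyDense (P : Set ℝ) : Prop :=
  ∃ l > 0, ∀ a ≥ (0:ℝ), ∃ τ ∈ P, τ ∈ Set.Icc a (a + l)

/-- f is remotely almost periodic. -/
def RemotelyAlmostPeriodic {B : Type*} [NormedAddCommGroup B] (f : ℝ → B) : Prop :=
  ∀ ε > 0, RelativelyDense {τ | 0 ≤ τ ∧ IsRemoteAlmostPeriod f ε τ}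


/-- The remotely almost periodic bounded uniformly continuous functions are closed under
uniform limits. -/
theorem remotelyAP_closed_under_uniform_limits
    {B : Type*} [NormedAddCommGroup B] [NormedSpace ℝ B] [CompleteSpace B]
    (f : ℝ → B) (fn : ℕ → ℝ → B)
    (hb : ∀ n, ∃ C, ∀ t, ‖fn n t‖ ≤ C) (huc : ∀ n, UniformContinuous (fn n))
    (hap : ∀ n, RemotelyAlmostPeriodic (fn n))
    (hconv : TendstoUniformly fn f atTop) :
    RemotelyAlmostPeriodic f := by
  intro ε hε
  -- choose n with uniform closeness ε/4
  have h4 : (0:ℝ) < ε / 4 := by linarith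
  obtain ⟨n, hn⟩ := (Metric.tendstoUniformly_iff.mp hconv (ε/4) h4).exists
  obtain ⟨l, hl, hdense⟩ := hap n (ε/4) h4
  obtain ⟨C, hC⟩ := hb n
  refine ⟨l, hl, fun a ha => ?_⟩
  obtain ⟨τ, ⟨hτ0, hτap⟩, hτmem⟩ := hdense a ha
  refine ⟨τ, ⟨hτ0, ?_⟩, hτmem⟩
  -- fn n (· + τ) - fn n is bounded
  have hbdd : IsBoundedUnder (· ≤ ·) atTop (fun t => ‖fn n (t + τ) - fn n t‖) :=
    isBoundedUnder_of ⟨2 * C, fun t =>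
      (norm_sub_le (fn n (t + τ)) (fn n t)).trans
        (by have := hC (t + τ); have := hC t; linarith)⟩
  have hev : ∀ᶠ t in atTop, ‖fn n (t + τ) - fn n t‖ < ε/4 :=
    eventually_lt_of_limsup_lt hτap hbdd
  have key : ∀ᶠ t in atTop, ‖f (t + τ) - f t‖ ≤ 3 * (ε/4) := by
    filter_upwards [hev] with t ht
    have h1 : ‖f (t + τ) - fn n (t + τ)‖ < ε/4 := by
      have := hn (t + τ); rw [dist_eq_norm] at this; simpa [norm_sub_rev] using this
    have h2 : ‖fn n t - f t‖ < ε/4 := by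
      have := hn t; rw [dist_eq_norm] at this; simpa [norm_sub_rev] using this
    calc ‖f (t + τ) - f t‖
        = ‖(f (t + τ) - fn n (t + τ)) + (fn n (t + τ) - fn n t) + (fn n t - f t)‖ := by
          congr 1; abel
      _ ≤ ‖f (t + τ) - fn n (t + τ)‖ + ‖fn n (t + τ) - fn n t‖ + ‖fn n t - f t‖ := by
          exact norm_add₃_le
      _ ≤ 3 * (ε/4) := by linarith
  have hcob : IsCoboundedUnder (· ≤ ·) atTop (fun t => ‖f (t + τ) - f t‖) :=
    isCoboundedUnder_le_of_le atTop (fun t => norm_nonneg _)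
  have := limsup_le_of_le hcob key
  unfold IsRemoteAlmostPeriod
  calc limsup (fun t => ‖f (t + τ) - f t‖) atTop ≤ 3 * (ε/4) := this
    _ < ε := by linarith
end
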